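/- Let g be the probability mass function of a sum of m independent Bernoulli random variables. Then for every integer k: g_k²·g_{k+1} − 2·g_{k+1}²·g_{k-1} + g_{k+2}·g_k·g_{k-1} ≥ 0. -/

import Mathlib

open Finset

/-- Probability mass function of a sum of independent Bernoulli random variables
indexed by the finite set `I`, with parameters `p i`. -/
def bernoulliSumPMF (I : Finset ℕ) (p : ℕ → ℝ) (k : ℤ) : ℝ :=
  if 0 ≤ k then
    ∑ S ∈ I.powersetCard k.toNat, (∏ i ∈ S, p i) * (∏ i ∈ I \ S, (1 - p i))
  else 0

/-!
Adding an independent Bernoulli(p) summand turns the mass function `a` into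
`k ↦ (1 - p) a k + p a (k - 1)`, so the theorem follows by induction on the number of summands,
starting from the point mass at `0`. The cubic inequality alone is not preserved by this step, so
the induction carries a stronger invariant: nonnegativity, log-concavity, and the cubic inequality
for both `a` and its reflection `k ↦ a (-k)`. The cubic form of the new sequence is a cubic in
`(1 - p, p)` whose outer coefficients are cubic forms of `a`; each middle coefficient, times a
positive product of terms of `a`, is a nonnegative combination of the inequalities of the
invariant, and where that product vanishes, log-concavity kills all but a visibly nonnegative
term. The reflected inequality survives because the reflection of a Bernoulli(p) step is a shifted
Bernoulli(1 - p) step.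
-/

def bernoulliConv (p : ℝ) (a : ℤ → ℝ) (k : ℤ) : ℝ :=
  (1 - p) * a k + p * a (k - 1)

theorem bernoulliSumPMF_of_neg (I : Finset ℕ) (p : ℕ → ℝ) {k : ℤ} (hk : k < 0) :
    bernoulliSumPMF I p k = 0 := by
  simp [bernoulliSumPMF, not_le.mpr hk]

theorem bernoulliSumPMF_empty (p : ℕ → ℝ) (k : ℤ) :
    bernoulliSumPMF ∅ p k = if k = 0 then 1 else 0 := by
  obtain hk | rfl | hk := lt_trichotomy k 0
  · simp [bernoulliSumPMF_of_neg _ _ hk, hk.ne]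
  · simp [bernoulliSumPMF]
  · have : (∅ : Finset ℕ).powersetCard k.toNat = ∅ := powersetCard_eq_empty.2 (by simpa using hk)
    simp [bernoulliSumPMF, hk.le, hk.ne', this]

theorem bernoulliSumPMF_insert {I : Finset ℕ} {a : ℕ} (ha : a ∉ I) (p : ℕ → ℝ) :
    bernoulliSumPMF (insert a I) p = bernoulliConv (p a) (bernoulliSumPMF I p) := by
  funext k
  obtain hk | rfl | hk := lt_trichotomy k 0
  · simp [bernoulliConv, bernoulliSumPMF_of_neg _ _ hk,
      bernoulliSumPMF_of_neg _ _ (by omega : k - 1 < 0)]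
  · simp [bernoulliConv, bernoulliSumPMF, prod_insert ha]
  obtain ⟨n, rfl⟩ : ∃ n : ℕ, k = n + 1 := ⟨(k - 1).toNat, by omega⟩
  have not_mem : ∀ m, ∀ S ∈ I.powersetCard m, a ∉ S :=
    fun m S hS haS => ha ((mem_powersetCard.1 hS).1 haS)
  simp only [bernoulliConv, bernoulliSumPMF, add_sub_cancel_right, Int.natCast_nonneg,
    show (0 : ℤ) ≤ n + 1 by omega, if_true, Int.toNat_natCast,
    show ((n : ℤ) + 1).toNat = n + 1 by omega]
  rw [powersetCard_succ_insert ha, sum_union, sum_image, mul_sum, mul_sum]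
  · congr 1
    · refine sum_congr rfl fun S hS => ?_
      rw [insert_sdiff_of_notMem _ (not_mem _ S hS), prod_insert (by simp [ha])]
      ring
    · refine sum_congr rfl fun T hT => ?_
      rw [prod_insert (not_mem _ T hT), insert_sdiff_insert, sdiff_insert_of_notMem ha]
      ring
  · intro T hT U hU hTU
    rw [← erase_insert (not_mem _ T hT), hTU, erase_insert (not_mem _ U hU)]
  · refine disjoint_left.2 fun S hS hS' => ?_
    obtain ⟨T, -, rfl⟩ := mem_image.1 hS'
    exact not_mem _ _ hS (mem_insert_self a T)

def cubicForm (a : ℤ → ℝ) (k : ℤ) : ℝ :=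
  a k ^ 2 * a (k + 1) - 2 * a (k + 1) ^ 2 * a (k - 1) + a (k + 2) * a k * a (k - 1)

theorem cubicForm_sub_one (a : ℤ → ℝ) (k : ℤ) :
    cubicForm a (k - 1) =
      a (k - 1) ^ 2 * a k - 2 * a k ^ 2 * a (k - 2) + a (k + 1) * a (k - 1) * a (k - 2) := by
  rw [cubicForm, sub_add_cancel, show k - 1 + 2 = k + 1 by ring, show k - 1 - 1 = k - 2 by ring]

theorem cubicForm_comp_add (a : ℤ → ℝ) (c k : ℤ) :
    cubicForm (fun j => a (j + c)) k = cubicForm a (k + c) := by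
  simp only [cubicForm]
  rw [show k + 1 + c = k + c + 1 by ring, show k - 1 + c = k + c - 1 by ring,
    show k + 2 + c = k + c + 2 by ring]

theorem cubicForm_comp_neg (a : ℤ → ℝ) (k : ℤ) :
    cubicForm (fun j => a (-j)) (-k) =
      a k ^ 2 * a (k - 1) - 2 * a (k - 1) ^ 2 * a (k + 1) + a (k - 2) * a k * a (k + 1) := by
  simp only [cubicForm, neg_neg]
  rw [show -(-k + 1) = k - 1 by ring, show -(-k - 1) = k + 1 by ring,
    show -(-k + 2) = k - 2 by ring]

/-- Stated for all nested pairs `[u, v] ⊆ [x, y]` with equal midpoints rather than only for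
neighbours, so that for nonnegative sequences it also excludes internal zeros. -/
def IsLogConcave (a : ℤ → ℝ) : Prop :=
  ∀ x u v y, x + y = u + v → x ≤ u → x ≤ v → a x * a y ≤ a u * a v

namespace IsLogConcave

variable {a : ℤ → ℝ}

theorem mul_eq_zero_of_eq_zero (h : IsLogConcave a) (ha : ∀ k, 0 ≤ a k) {i j l : ℤ}
    (hij : i ≤ j) (hjl : j ≤ l) (hj : a j = 0) : a i * a l = 0 :=
  le_antisymm (by simpa [hj] using h i j (i + l - j) l (by ring) hij (by omega))
    (mul_nonneg (ha i) (ha l))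

theorem comp_neg (h : IsLogConcave a) : IsLogConcave (fun j => a (-j)) := by
  intro x u v y hsum hxu hxv
  simpa only [mul_comm] using h (-y) (-u) (-v) (-x) (by omega) (by omega) (by omega)

theorem comp_add (h : IsLogConcave a) (c : ℤ) : IsLogConcave (fun j => a (j + c)) :=
  fun x u v y hsum hxu hxv => h (x + c) (u + c) (v + c) (y + c) (by omega) (by omega) (by omega)

theorem bernoulliConv (h : IsLogConcave a) {p : ℝ} (hp0 : 0 ≤ p) (hp1 : p ≤ 1) :
    IsLogConcave (bernoulliConv p a) := by
  intro x u v y hsum hxu hxv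
  obtain rfl | hxv := hxv.eq_or_lt
  · obtain rfl : y = u := by omega
    exact (mul_comm _ _).le
  have h₁ := h x u v y hsum hxu hxv.le
  have h₂ := h (x - 1) (u - 1) (v - 1) (y - 1) (by omega) (by omega) (by omega)
  have h₃ := h x u (v - 1) (y - 1) (by omega) hxu (by omega)
  have h₄ := h (x - 1) (u - 1) v y (by omega) (by omega) (by omega)
  unfold _root_.bernoulliConv
  linear_combination (1 - p) ^ 2 * h₁ + p ^ 2 * h₂ +
    mul_le_mul_of_nonneg_left (add_le_add h₃ h₄) (mul_nonneg (sub_nonneg.2 hp1) hp0)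

end IsLogConcave

def cubicCoeff₁ (a : ℤ → ℝ) (k : ℤ) : ℝ :=
  a k ^ 3 - a (k - 1) * a k * a (k + 1) - 2 * a (k - 2) * a (k + 1) ^ 2
    + a (k - 1) ^ 2 * a (k + 2) + a (k - 2) * a k * a (k + 2)

def cubicCoeff₂ (a : ℤ → ℝ) (k : ℤ) : ℝ :=
  2 * a (k - 1) ^ 2 * a (k + 1) - 3 * a (k - 2) * a k * a (k + 1)
    + a (k - 2) * a (k - 1) * a (k + 2)

theorem cubicForm_bernoulliConv (p : ℝ) (a : ℤ → ℝ) (k : ℤ) :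
    cubicForm (bernoulliConv p a) k =
      (1 - p) ^ 3 * cubicForm a k + (1 - p) ^ 2 * p * cubicCoeff₁ a k
        + (1 - p) * p ^ 2 * cubicCoeff₂ a k + p ^ 3 * cubicForm a (k - 1) := by
  rw [cubicForm_sub_one]
  simp only [cubicForm, cubicCoeff₁, cubicCoeff₂, bernoulliConv, add_sub_cancel_right]
  rw [show k + 2 - 1 = k + 1 by ring, show k - 1 - 1 = k - 2 by ring]
  ring

structure IsCubicLogConcave (a : ℤ → ℝ) : Prop where
  nonneg : ∀ k, 0 ≤ a k
  isLogConcave : IsLogConcave a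
  cubicForm_nonneg : ∀ k, 0 ≤ cubicForm a k
  cubicForm_comp_neg_nonneg : ∀ k, 0 ≤ cubicForm (fun j => a (-j)) k

namespace IsCubicLogConcave

variable {a : ℤ → ℝ}

theorem cubicCoeff₁_nonneg (h : IsCubicLogConcave a) (k : ℤ) : 0 ≤ cubicCoeff₁ a k := by
  have nn := h.nonneg
  have lc := h.isLogConcave
  obtain hpos | hzero := (mul_nonneg (nn (k - 1)) (nn (k + 1))).lt_or_eq
  · have E₀ := h.cubicForm_nonneg k
    have E₁ := h.cubicForm_nonneg (k - 1)
    have R₀ := h.cubicForm_comp_neg_nonneg (-k)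
    have M := sub_nonneg.2 (lc (k - 1) k (k + 1) (k + 2) (by ring) (by omega) (by omega))
    rw [cubicForm_sub_one] at E₁
    rw [cubicForm_comp_neg] at R₀
    unfold cubicForm at E₀
    refine nonneg_of_mul_nonneg_right ?_ hpos
    unfold cubicCoeff₁
    linear_combination (1 / 2 : ℝ) * mul_nonneg R₀ M + mul_nonneg (sq_nonneg (a (k + 1))) E₁
      + (1 / 2 : ℝ) * mul_nonneg (add_nonneg (mul_nonneg (nn (k - 1)) (nn k))
        (mul_nonneg (by norm_num : (0 : ℝ) ≤ 3) (mul_nonneg (nn (k - 2)) (nn (k + 1))))) E₀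
  · have hcube : cubicCoeff₁ a k = a k ^ 3 := by
      obtain h₀ | h₀ := mul_eq_zero.1 hzero.symm
      · have z₁ := lc.mul_eq_zero_of_eq_zero nn (by omega : k - 2 ≤ _) (by omega : _ ≤ k) h₀
        have z₂ := lc.mul_eq_zero_of_eq_zero nn (by omega : k - 2 ≤ _) (by omega : _ ≤ k + 1) h₀
        unfold cubicCoeff₁
        linear_combination (a (k - 1) * a (k + 2) - a k * a (k + 1)) * h₀
          - 2 * a (k + 1) * z₂ + a (k + 2) * z₁
      · have z₁ := lc.mul_eq_zero_of_eq_zero nn (by omega : k ≤ _) (by omega : _ ≤ k + 2) h₀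
        have z₂ := lc.mul_eq_zero_of_eq_zero nn (by omega : k - 1 ≤ _) (by omega : _ ≤ k + 2) h₀
        unfold cubicCoeff₁
        linear_combination (-(a (k - 1) * a k) - 2 * a (k - 2) * a (k + 1)) * h₀
          + a (k - 1) * z₂ + a (k - 2) * z₁
    rw [hcube]
    exact pow_nonneg (nn k) 3

theorem cubicCoeff₂_nonneg (h : IsCubicLogConcave a) (k : ℤ) : 0 ≤ cubicCoeff₂ a k := by
  have nn := h.nonneg
  obtain hpos | h₀ := (nn k).lt_or_eq
  · have E₀ := h.cubicForm_nonneg k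
    have E₁ := h.cubicForm_nonneg (k - 1)
    rw [cubicForm_sub_one] at E₁
    unfold cubicForm at E₀
    refine nonneg_of_mul_nonneg_right ?_ hpos
    unfold cubicCoeff₂
    linear_combination 2 * mul_nonneg (nn (k + 1)) E₁ + mul_nonneg (nn (k - 2)) E₀
  · have lc := h.isLogConcave
    have z₁ := lc.mul_eq_zero_of_eq_zero nn (by omega : k - 1 ≤ _) (by omega : _ ≤ k + 1) h₀.symm
    have z₂ := lc.mul_eq_zero_of_eq_zero nn (by omega : k - 2 ≤ _) (by omega : _ ≤ k + 1) h₀.symm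
    have z₃ := lc.mul_eq_zero_of_eq_zero nn (by omega : k - 2 ≤ _) (by omega : _ ≤ k + 2) h₀.symm
    have hzero : cubicCoeff₂ a k = 0 := by
      unfold cubicCoeff₂
      linear_combination 2 * a (k - 1) * z₁ - 3 * a k * z₂ + a (k - 1) * z₃
    exact hzero.ge

theorem cubicForm_bernoulliConv_nonneg (h : IsCubicLogConcave a) {p : ℝ} (hp0 : 0 ≤ p)
    (hp1 : p ≤ 1) (k : ℤ) : 0 ≤ cubicForm (bernoulliConv p a) k := by
  have hq : 0 ≤ 1 - p := sub_nonneg.2 hp1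
  rw [cubicForm_bernoulliConv]
  have := h.cubicForm_nonneg k
  have := h.cubicForm_nonneg (k - 1)
  have := h.cubicCoeff₁_nonneg k
  have := h.cubicCoeff₂_nonneg k
  positivity

theorem comp_neg (h : IsCubicLogConcave a) : IsCubicLogConcave (fun j => a (-j)) where
  nonneg j := h.nonneg (-j)
  isLogConcave := h.isLogConcave.comp_neg
  cubicForm_nonneg := h.cubicForm_comp_neg_nonneg
  cubicForm_comp_neg_nonneg := by simpa only [neg_neg] using h.cubicForm_nonneg

theorem comp_add (h : IsCubicLogConcave a) (c : ℤ) : IsCubicLogConcave (fun j => a (j + c)) where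
  nonneg j := h.nonneg (j + c)
  isLogConcave := h.isLogConcave.comp_add c
  cubicForm_nonneg k := by
    rw [cubicForm_comp_add]
    exact h.cubicForm_nonneg (k + c)
  cubicForm_comp_neg_nonneg k := by
    have hshift := cubicForm_comp_add (fun j => a (-j)) (-c) k
    simp only [neg_add, neg_neg] at hshift
    rw [hshift]
    exact h.cubicForm_comp_neg_nonneg (k + -c)

end IsCubicLogConcave

theorem bernoulliConv_comp_neg (p : ℝ) (a : ℤ → ℝ) :
    (fun j => bernoulliConv p a (-j)) = bernoulliConv (1 - p) (fun j => a (-(j + 1))) := by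
  funext j
  simp only [bernoulliConv]
  rw [show -(j - 1 + 1) = -j by ring, show -j - 1 = -(j + 1) by ring]
  ring

theorem IsCubicLogConcave.bernoulliConv {a : ℤ → ℝ} (h : IsCubicLogConcave a) {p : ℝ}
    (hp0 : 0 ≤ p) (hp1 : p ≤ 1) : IsCubicLogConcave (bernoulliConv p a) where
  nonneg k :=
    add_nonneg (mul_nonneg (sub_nonneg.2 hp1) (h.nonneg k)) (mul_nonneg hp0 (h.nonneg (k - 1)))
  isLogConcave := h.isLogConcave.bernoulliConv hp0 hp1
  cubicForm_nonneg := h.cubicForm_bernoulliConv_nonneg hp0 hp1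
  cubicForm_comp_neg_nonneg := by
    rw [bernoulliConv_comp_neg]
    exact (h.comp_neg.comp_add 1).cubicForm_bernoulliConv_nonneg (by linarith) (by linarith)

theorem isCubicLogConcave_delta : IsCubicLogConcave (fun k => if k = 0 then 1 else 0) := by
  have cubic : ∀ k, 0 ≤ cubicForm (fun k => if k = 0 then 1 else 0) k := by
    intro k
    simp only [cubicForm]
    split_ifs <;> first | omega | norm_num
  refine ⟨fun k => by positivity, ?_, cubic, by simpa only [neg_eq_zero] using cubic⟩
  intro x u v y hsum hxu hxv
  dsimp only
  split_ifs <;> first | omega | norm_num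

theorem isCubicLogConcave_bernoulliSumPMF {I : Finset ℕ} {p : ℕ → ℝ}
    (hp : ∀ i ∈ I, 0 ≤ p i ∧ p i ≤ 1) : IsCubicLogConcave (bernoulliSumPMF I p) := by
  induction I using Finset.induction_on with
  | empty =>
    rw [show bernoulliSumPMF ∅ p = _ from funext (bernoulliSumPMF_empty p)]
    exact isCubicLogConcave_delta
  | insert a I ha ih =>
    obtain ⟨hp0, hp1⟩ := hp a (mem_insert_self a I)
    rw [bernoulliSumPMF_insert ha]
    exact (ih fun i hi => hp i (mem_insert_of_mem hi)).bernoulliConv hp0 hp1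

theorem bernoulli_sum_cubic_C1bar (m : ℕ) (p : ℕ → ℝ)
    (hp : ∀ i ∈ Finset.range m, 0 ≤ p i ∧ p i ≤ 1)
    (g : ℤ → ℝ) (hg : ∀ k, g k = bernoulliSumPMF (Finset.range m) p k) (k : ℤ) :
    0 ≤ g k ^ 2 * g (k + 1) - 2 * g (k + 1) ^ 2 * g (k - 1) + g (k + 2) * g k * g (k - 1) := by
  obtain rfl : g = bernoulliSumPMF (Finset.range m) p := funext hg
  exact (isCubicLogConcave_bernoulliSumPMF hp).cubicForm_nonneg k
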